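/- arXiv:2512.18058 — 2 statements merged into one kernel-verified Lean document; each statement's English description precedes it below -/
import Mathlib

section
/- Let d ≥ 1, σ ≥ 0, p ∈ [1, ∞), let h : ℝ^d → ℂ be measurable, let a ∈ ℝ^d, R > 0, and let S ⊆ ℝ^d be measurable with S − a ⊆ {x ∈ ℝ^d : |x| ≥ R}. Then ‖⟨·⟩^σ h(· − a)‖_{L^p(S)} ≤ 2^{σ/2} (⟨a⟩/⟨R⟩)^σ ‖⟨·⟩^{2σ} h‖_{L^p(\{|x| ≥ R\})} (an inequality in [0, ∞]). -/
open MeasureTheory ENNReal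

/-!
With `y = x - a`, Peetre's inequality gives `⟨y + a⟩^σ ≤ 2^{σ/2} ⟨a⟩^σ ⟨y⟩^σ`, and on `|y| ≥ R`
the factor `⟨y⟩^σ` is at most `⟨y⟩^{2σ} / ⟨R⟩^σ`. This pointwise bound holds on the preimage of
`{|y| ≥ R}` under `x ↦ x - a`, which contains `S`, and translation invariance of Lebesgue measure
carries the `L^p` norm over that preimage to `{|y| ≥ R}`.
-/

theorem one_add_norm_add_sq_le {E : Type*} [SeminormedAddCommGroup E] (x y : E) :
    1 + ‖x + y‖ ^ 2 ≤ 2 * (1 + ‖x‖ ^ 2) * (1 + ‖y‖ ^ 2) := by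
  nlinarith [norm_add_le x y, norm_nonneg x, norm_nonneg y, norm_nonneg (x + y),
    sq_nonneg (‖x‖ - ‖y‖), mul_nonneg (sq_nonneg ‖x‖) (sq_nonneg ‖y‖)]

theorem one_add_sq_rpow_mul_le {r R s : ℝ} (hR : 0 ≤ R) (hRr : R ≤ r) (hs : 0 ≤ s) :
    (1 + R ^ 2) ^ s * (1 + r ^ 2) ^ s ≤ (1 + r ^ 2) ^ (2 * s) := by
  rw [two_mul, Real.rpow_add (by positivity)]
  gcongr

theorem rpow_half_div_rpow_half_rpow {A B σ : ℝ} (hA : 0 ≤ A) (hB : 0 ≤ B) :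
    (A ^ ((1 : ℝ) / 2) / B ^ ((1 : ℝ) / 2)) ^ σ = A ^ (σ / 2) / B ^ (σ / 2) := by
  rw [Real.div_rpow (by positivity) (by positivity), ← Real.rpow_mul hA, ← Real.rpow_mul hB]
  ring_nf

theorem eLpNorm_comp_sub_right_restrict_preimage {G ε : Type*} [MeasurableSpace G] [AddGroup G]
    [MeasurableAdd G] [TopologicalSpace ε] [ContinuousENorm ε] (μ : Measure G)
    [μ.IsAddRightInvariant] (f : G → ε) (p : ℝ≥0∞) (a : G) (T : Set G) :
    eLpNorm (fun x => f (x - a)) p (μ.restrict ((· - a) ⁻¹' T)) = eLpNorm f p (μ.restrict T) := by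
  have e : MeasurableEmbedding (· - a) := (MeasurableEquiv.subRight a).measurableEmbedding
  rw [← ((measurePreserving_sub_right μ a).restrict_preimage_emb e T).map_eq,
    e.eLpNorm_map_measure]
  rfl

theorem one_add_norm_sq_rpow_le_of_le_norm_sub {E : Type*} [SeminormedAddCommGroup E]
    {σ R : ℝ} (hσ : 0 ≤ σ) (hR : 0 ≤ R) {x a : E} (hx : R ≤ ‖x - a‖) :
    (1 + ‖x‖ ^ 2) ^ (σ / 2) ≤ 2 ^ (σ / 2) *
      ((1 + ‖a‖ ^ 2) ^ ((1 : ℝ) / 2) / (1 + R ^ 2) ^ ((1 : ℝ) / 2)) ^ σ *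
        (1 + ‖x - a‖ ^ 2) ^ ((2 * σ) / 2) := by
  have hpeetre : (1 + ‖x‖ ^ 2) ^ (σ / 2) ≤
      2 ^ (σ / 2) * (1 + ‖a‖ ^ 2) ^ (σ / 2) * (1 + ‖x - a‖ ^ 2) ^ (σ / 2) := by
    rw [← Real.mul_rpow (by positivity) (by positivity),
      ← Real.mul_rpow (by positivity) (by positivity)]
    gcongr
    simpa using one_add_norm_add_sq_le a (x - a)
  have htail := one_add_sq_rpow_mul_le hR hx (div_nonneg hσ zero_le_two)
  rw [← mul_div_assoc] at htail
  rw [rpow_half_div_rpow_half_rpow (by positivity) (by positivity)]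
  calc (1 + ‖x‖ ^ 2) ^ (σ / 2)
      ≤ 2 ^ (σ / 2) * (1 + ‖a‖ ^ 2) ^ (σ / 2) * (1 + ‖x - a‖ ^ 2) ^ (σ / 2) := hpeetre
    _ = 2 ^ (σ / 2) * ((1 + ‖a‖ ^ 2) ^ (σ / 2) / (1 + R ^ 2) ^ (σ / 2)) *
          ((1 + R ^ 2) ^ (σ / 2) * (1 + ‖x - a‖ ^ 2) ^ (σ / 2)) := by
      field_simp
    _ ≤ _ := by gcongr

theorem weighted_Lp_norm_translate_tail_le_general
    (d : ℕ) (σ : ℝ) (hσ : 0 ≤ σ) (p : ℝ≥0∞)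
    (h : EuclideanSpace ℝ (Fin d) → ℂ)
    (a : EuclideanSpace ℝ (Fin d)) (R : ℝ) (hR : 0 < R)
    (S : Set (EuclideanSpace ℝ (Fin d)))
    (hSa : (fun x => x - a) '' S ⊆ {x : EuclideanSpace ℝ (Fin d) | R ≤ ‖x‖}) :
    eLpNorm (fun x => ((1 + ‖x‖ ^ 2) ^ (σ / 2) : ℝ) • h (x - a)) p (volume.restrict S) ≤
      ENNReal.ofReal ((2 : ℝ) ^ (σ / 2) *
          ((1 + ‖a‖ ^ 2) ^ ((1 : ℝ) / 2) / (1 + R ^ 2) ^ ((1 : ℝ) / 2)) ^ σ) *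
        eLpNorm (fun x => ((1 + ‖x‖ ^ 2) ^ ((2 * σ) / 2) : ℝ) • h x) p
          (volume.restrict {x : EuclideanSpace ℝ (Fin d) | R ≤ ‖x‖}) := by
  set T : Set (EuclideanSpace ℝ (Fin d)) := {x | R ≤ ‖x‖}
  set C : ℝ := (2 : ℝ) ^ (σ / 2) *
      ((1 + ‖a‖ ^ 2) ^ ((1 : ℝ) / 2) / (1 + R ^ 2) ^ ((1 : ℝ) / 2)) ^ σ
  set F := fun x : EuclideanSpace ℝ (Fin d) => ((1 + ‖x‖ ^ 2) ^ ((2 * σ) / 2) : ℝ) • h x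
  have hT : MeasurableSet ((· - a) ⁻¹' T) :=
    measurableSet_le measurable_const (measurable_norm.comp (measurable_sub_const a))
  calc eLpNorm (fun x => ((1 + ‖x‖ ^ 2) ^ (σ / 2) : ℝ) • h (x - a)) p (volume.restrict S)
      ≤ eLpNorm (fun x => ((1 + ‖x‖ ^ 2) ^ (σ / 2) : ℝ) • h (x - a)) p
          (volume.restrict ((· - a) ⁻¹' T)) :=
        eLpNorm_mono_measure _ (Measure.restrict_mono (Set.image_subset_iff.1 hSa) le_rfl)
    _ ≤ eLpNorm (fun x => (C • F) (x - a)) p (volume.restrict ((· - a) ⁻¹' T)) := by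
        refine eLpNorm_mono_ae ((ae_restrict_iff' hT).2 (Filter.Eventually.of_forall ?_))
        intro x hx
        simp only [F, Pi.smul_apply, norm_smul, Real.norm_eq_abs, ← mul_assoc]
        rw [abs_of_nonneg (by positivity), abs_of_nonneg (by positivity),
          abs_of_nonneg (by positivity)]
        gcongr
        exact one_add_norm_sq_rpow_le_of_le_norm_sub hσ hR.le hx
    _ = ENNReal.ofReal C * eLpNorm F p (volume.restrict T) := by
        rw [eLpNorm_comp_sub_right_restrict_preimage, eLpNorm_const_smul,
          Real.enorm_of_nonneg (by positivity)]

/-- **Weighted tail bound for translates.**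
If `S − a ⊆ {|x| ≥ R}`, then
`‖⟨·⟩^σ h(· − a)‖_{L^p(S)} ≤ 2^{σ/2} (⟨a⟩/⟨R⟩)^σ ‖⟨·⟩^{2σ} h‖_{L^p({|x| ≥ R})}` (in `[0,∞]`). -/
theorem weighted_Lp_norm_translate_tail_le
    (d : ℕ) (hd : 1 ≤ d) (σ : ℝ) (hσ : 0 ≤ σ) (p : ℝ≥0∞) (hp : 1 ≤ p) (hp' : p ≠ ∞)
    (h : EuclideanSpace ℝ (Fin d) → ℂ) (hmeas : Measurable h)
    (a : EuclideanSpace ℝ (Fin d)) (R : ℝ) (hR : 0 < R)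
    (S : Set (EuclideanSpace ℝ (Fin d))) (hS : MeasurableSet S)
    (hSa : (fun x => x - a) '' S ⊆ {x : EuclideanSpace ℝ (Fin d) | R ≤ ‖x‖}) :
    eLpNorm (fun x => ((1 + ‖x‖ ^ 2) ^ (σ / 2) : ℝ) • h (x - a)) p (volume.restrict S) ≤
      ENNReal.ofReal ((2 : ℝ) ^ (σ / 2) *
          ((1 + ‖a‖ ^ 2) ^ ((1 : ℝ) / 2) / (1 + R ^ 2) ^ ((1 : ℝ) / 2)) ^ σ) *
        eLpNorm (fun x => ((1 + ‖x‖ ^ 2) ^ ((2 * σ) / 2) : ℝ) • h x) p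
          (volume.restrict {x : EuclideanSpace ℝ (Fin d) | R ≤ ‖x‖}) :=
  weighted_Lp_norm_translate_tail_le_general d σ hσ p h a R hR S hSa
end

section
/- Let Ω ⊆ ℂ be open, p ∈ [1, ∞), and let F₁, F₂ : Ω → ℂ be holomorphic on Ω with F₁(z) ≠ 0 for all z ∈ Ω and with F₂ not identically zero on any connected component of Ω. Suppose there exist λ₀ ∈ ℂ and C_P ≥ 0 (a Poincaré-type hypothesis) such that ‖F₂ − λ₀ F₁‖_{L^p(Ω)} ≤ C_P · ‖ F₂′ − F₂ F₁′/F₁ ‖_{L^p(Ω)}. Then there exists λ ∈ ℂ with |λ| = 1 such that ‖F₂ − λ F₁‖_{L^p(Ω)} ≤ 2 C_P · ( ‖ z ↦ ‖D|F₂|(z) − D|F₁|(z)‖ ‖_{L^p(Ω)} + ‖ z ↦ (‖D|F₁|(z)‖ / |F₁(z)|) · | |F₁(z)| − |F₂(z)| | ‖_{L^p(Ω)} ) + ‖ |F₁| − |F₂| ‖_{L^p(Ω)} (an inequality in [0, ∞]). -/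
/-!
Write `Lᵢ = Fᵢ'/Fᵢ`. The gradient of `|Fᵢ|` is `|Fᵢ| · conj Lᵢ`, while
`F₂' - F₂F₁'/F₁ = F₂ (L₂ - L₁)`; so off the zeros of `F₂`, which are isolated and hence
Lebesgue-null, the triangle inequality `|F₂| |L₂ - L₁| ≤ ||F₂|L₂ - |F₁|L₁| + ||F₁| - |F₂|| |L₁|`
bounds the right-hand side of the Poincaré inequality by the two gradient terms. Replacing `λ₀`
by the nearest unimodular `λ` costs `|λ₀ - λ| |F₁| = ||λ₀F₁| - |F₁|| ≤ |F₂ - λ₀F₁| + ||F₁| - |F₂||`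
pointwise.
-/

open MeasureTheory ENNReal ComplexConjugate

theorem HasFDerivAt.norm {G F : Type*} [NormedAddCommGroup G] [NormedSpace ℝ G]
    [NormedAddCommGroup F] [InnerProductSpace ℝ F] {f : G → F} {f' : G →L[ℝ] F} {x : G} (hf : HasFDerivAt f f' x)
    (h0 : f x ≠ 0) :
    HasFDerivAt (‖f ·‖) ((‖f x‖⁻¹ • innerSL ℝ (f x)).comp f') x := by
  have hn := (hf.differentiableAt.norm ℝ h0).hasFDerivAt
  have hsq : (2 * ‖f x‖) • fderiv ℝ (‖f ·‖) x = (2 : ℝ) • (innerSL ℝ (f x)).comp f' := by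
    simpa [mul_smul, two_smul, add_smul] using (hn.pow 2).unique hf.norm_sq
  have hpos : 2 * ‖f x‖ ≠ 0 := by positivity
  convert hn using 1
  rw [← inv_smul_smul₀ hpos (fderiv ℝ _ x), hsq, smul_smul, ContinuousLinearMap.smul_comp]
  congr 1
  field_simp

theorem fderiv_norm_eq_innerSL {F : ℂ → ℂ} {z : ℂ} (hF : DifferentiableAt ℂ F z) (h0 : F z ≠ 0) :
    fderiv ℝ (‖F ·‖) z = innerSL ℝ (‖F z‖ • conj (logDeriv F z)) := by
  rw [((hF.hasDerivAt.hasFDerivAt.restrictScalars ℝ).norm h0).fderiv]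
  refine ContinuousLinearMap.ext fun v => ?_
  have hconj : conj (F z) = (‖F z‖ : ℂ) ^ 2 / F z := by
    rw [eq_div_iff h0, mul_comm, Complex.mul_conj']
  have hn : (‖F z‖ : ℂ) ≠ 0 := by simpa using h0
  simp only [ContinuousLinearMap.comp_apply, smul_apply, innerSL_apply_apply,
    ContinuousLinearMap.coe_restrictScalars', ContinuousLinearMap.toSpanSingleton_apply,
    Complex.inner, smul_eq_mul, map_smul, Complex.conj_conj, ← Complex.re_ofReal_mul]
  congr 1
  rw [hconj, logDeriv_apply]
  push_cast
  field_simp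

theorem norm_smul_sub_le {𝕜 E : Type*} [NormedField 𝕜] [SeminormedAddCommGroup E]
    [NormedSpace 𝕜 E] (r s : 𝕜) (x y : E) :
    ‖r • (x - y)‖ ≤ ‖r • x - s • y‖ + ‖s - r‖ * ‖y‖ := by
  calc ‖r • (x - y)‖ = ‖(r • x - s • y) + (s - r) • y‖ := by congr 1; module
    _ ≤ ‖r • x - s • y‖ + ‖s - r‖ * ‖y‖ := (norm_add_le _ _).trans_eq (by rw [norm_smul])

theorem norm_deriv_sub_mul_deriv_div_le {F₁ F₂ : ℂ → ℂ} {z : ℂ} (hd₁ : DifferentiableAt ℂ F₁ z)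
    (hd₂ : DifferentiableAt ℂ F₂ z) (h₁ : F₁ z ≠ 0) (h₂ : F₂ z ≠ 0) :
    ‖deriv F₂ z - F₂ z * deriv F₁ z / F₁ z‖ ≤
      ‖fderiv ℝ (‖F₂ ·‖) z - fderiv ℝ (‖F₁ ·‖) z‖ +
        ‖fderiv ℝ (‖F₁ ·‖) z‖ / ‖F₁ z‖ * |‖F₁ z‖ - ‖F₂ z‖| := by
  have hlhs : ‖deriv F₂ z - F₂ z * deriv F₁ z / F₁ z‖ =
      ‖‖F₂ z‖ • (logDeriv F₂ z - logDeriv F₁ z)‖ := by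
    rw [norm_smul, norm_norm, ← norm_mul, logDeriv_apply, logDeriv_apply]
    congr 1
    field_simp
  have hdiff : ‖fderiv ℝ (‖F₂ ·‖) z - fderiv ℝ (‖F₁ ·‖) z‖ =
      ‖‖F₂ z‖ • logDeriv F₂ z - ‖F₁ z‖ • logDeriv F₁ z‖ := by
    rw [fderiv_norm_eq_innerSL hd₁ h₁, fderiv_norm_eq_innerSL hd₂ h₂, ← map_sub,
      innerSL_apply_norm, ← Complex.norm_conj]
    simp [Complex.real_smul]
  have hL₁ : ‖fderiv ℝ (‖F₁ ·‖) z‖ = ‖F₁ z‖ * ‖logDeriv F₁ z‖ := by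
    rw [fderiv_norm_eq_innerSL hd₁ h₁, innerSL_apply_norm, norm_smul, Complex.norm_conj, norm_norm]
  rw [hlhs, hdiff, hL₁, mul_div_cancel_left₀ _ (norm_ne_zero_iff.mpr h₁), mul_comm,
    ← Real.norm_eq_abs]
  exact norm_smul_sub_le _ _ _ _

theorem countable_setOf_eq_zero {𝕜 E : Type*} [NontriviallyNormedField 𝕜]
    [SecondCountableTopology 𝕜] [NormedAddCommGroup E] [NormedSpace 𝕜 E] {Ω : Set 𝕜}
    {F : 𝕜 → E} (hF : AnalyticOnNhd 𝕜 F Ω)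
    (hne : ∀ z ∈ Ω, ∃ w ∈ connectedComponentIn Ω z, F w ≠ 0) :
    {z | z ∈ Ω ∧ F z = 0}.Countable := by
  refine (HereditarilyLindelofSpace.isLindelof _).countable_of_isDiscrete ?_
  rw [isDiscrete_iff_nhdsNE]
  rintro z ⟨hz, -⟩
  rw [Filter.inf_principal_eq_bot]
  rcases (hF z hz).eventually_eq_zero_or_eventually_ne_zero with hzero | hnonzero
  · obtain ⟨w, hw, hFw⟩ := hne z hz
    have hFC : AnalyticOnNhd 𝕜 F (connectedComponentIn Ω z) :=
      hF.mono (connectedComponentIn_subset Ω z)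
    exact absurd (hFC.eqOn_zero_of_preconnected_of_eventuallyEq_zero
      isPreconnected_connectedComponentIn (mem_connectedComponentIn hz) hzero hw) hFw
  · filter_upwards [hnonzero] with w hw hwS using hw hwS.2

theorem ae_restrict_ne_zero_of_differentiableOn (μ : Measure ℂ) [NullSingletonClass μ] {Ω : Set ℂ}
    (hΩ : IsOpen Ω) {F : ℂ → ℂ} (hF : DifferentiableOn ℂ F Ω)
    (hne : ∀ z ∈ Ω, ∃ w ∈ connectedComponentIn Ω z, F w ≠ 0) :
    ∀ᵐ z ∂μ.restrict Ω, F z ≠ 0 := by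
  rw [ae_restrict_iff' hΩ.measurableSet]
  filter_upwards [(countable_setOf_eq_zero (hF.analyticOnNhd hΩ) hne).ae_notMem μ]
    with z hz hzΩ hFz using hz ⟨hzΩ, hFz⟩

theorem eLpNorm_deriv_sub_mul_deriv_div_le (μ : Measure ℂ) [NullSingletonClass μ] {Ω : Set ℂ}
    (hΩ : IsOpen Ω) {p : ℝ≥0∞} (hp : 1 ≤ p) {F₁ F₂ : ℂ → ℂ} (h₁ : DifferentiableOn ℂ F₁ Ω)
    (h₂ : DifferentiableOn ℂ F₂ Ω) (h₁ne : ∀ z ∈ Ω, F₁ z ≠ 0)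
    (h₂ne : ∀ z ∈ Ω, ∃ w ∈ connectedComponentIn Ω z, F₂ w ≠ 0) :
    eLpNorm (fun z => deriv F₂ z - F₂ z * deriv F₁ z / F₁ z) p (μ.restrict Ω) ≤
      eLpNorm (fun z => ‖fderiv ℝ (‖F₂ ·‖) z - fderiv ℝ (‖F₁ ·‖) z‖) p (μ.restrict Ω) +
        eLpNorm (fun z => ‖fderiv ℝ (‖F₁ ·‖) z‖ / ‖F₁ z‖ * |‖F₁ z‖ - ‖F₂ z‖|) p
          (μ.restrict Ω) := by
  have hΩm := hΩ.measurableSet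
  have hm₁ : AEStronglyMeasurable F₁ (μ.restrict Ω) := h₁.continuousOn.aestronglyMeasurable hΩm
  have hm₂ : AEStronglyMeasurable F₂ (μ.restrict Ω) := h₂.continuousOn.aestronglyMeasurable hΩm
  set A : ℂ → ℝ := fun z => ‖fderiv ℝ (‖F₂ ·‖) z - fderiv ℝ (‖F₁ ·‖) z‖
  set B : ℂ → ℝ := fun z => ‖fderiv ℝ (‖F₁ ·‖) z‖ / ‖F₁ z‖ * |‖F₁ z‖ - ‖F₂ z‖|
  have hA : AEStronglyMeasurable A (μ.restrict Ω) :=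
    ((measurable_fderiv ℝ _).sub (measurable_fderiv ℝ _)).norm.aestronglyMeasurable
  have hB : AEStronglyMeasurable B (μ.restrict Ω) :=
    (((measurable_fderiv ℝ _).norm.aemeasurable.div hm₁.norm.aemeasurable).mul
      (hm₁.norm.sub hm₂.norm).aemeasurable.abs).aestronglyMeasurable
  refine (eLpNorm_mono_ae (g := A + B) ?_).trans (eLpNorm_add_le hA hB hp)
  filter_upwards [ae_restrict_mem hΩm, ae_restrict_ne_zero_of_differentiableOn μ hΩ h₂ h₂ne]
    with z hz hF₂z
  have hBz : 0 ≤ B z := by positivity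
  rw [Pi.add_apply, Real.norm_of_nonneg (add_nonneg (norm_nonneg _) hBz)]
  exact norm_deriv_sub_mul_deriv_div_le (h₁.differentiableAt (hΩ.mem_nhds hz))
    (h₂.differentiableAt (hΩ.mem_nhds hz)) (h₁ne z hz) hF₂z

theorem exists_norm_eq_one_norm_sub_eq {V : Type*} [NormedAddCommGroup V] [NormedSpace ℝ V]
    [Nontrivial V] (v : V) : ∃ u : V, ‖u‖ = 1 ∧ ‖v - u‖ = |‖v‖ - 1| := by
  rcases eq_or_ne v 0 with rfl | hv
  · obtain ⟨u, hu⟩ := exists_norm_eq V zero_le_one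
    exact ⟨u, hu, by simp [hu]⟩
  · refine ⟨‖v‖⁻¹ • v, norm_smul_inv_norm hv, ?_⟩
    have hv' : ‖v‖ ≠ 0 := norm_ne_zero_iff.mpr hv
    rw [show v - ‖v‖⁻¹ • v = (1 - ‖v‖⁻¹) • v by module, norm_smul, Real.norm_eq_abs,
      ← abs_norm v, ← abs_mul, abs_norm, sub_mul, one_mul, inv_mul_cancel₀ hv']

theorem exists_norm_eq_one_norm_sub_smul_le {𝕜 E : Type*} [RCLike 𝕜] [SeminormedAddCommGroup E]
    [NormedSpace 𝕜 E] (l₀ : 𝕜) :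
    ∃ l : 𝕜, ‖l‖ = 1 ∧ ∀ x y : E, ‖y - l • x‖ ≤ 2 * ‖y - l₀ • x‖ + |‖x‖ - ‖y‖| := by
  obtain ⟨l, hl, hdist⟩ := exists_norm_eq_one_norm_sub_eq l₀
  refine ⟨l, hl, fun x y => ?_⟩
  calc ‖y - l • x‖ ≤ ‖y - l₀ • x‖ + ‖(l₀ - l) • x‖ := by
        rw [sub_smul]
        exact norm_sub_le_norm_sub_add_norm_sub _ _ _
    _ = ‖y - l₀ • x‖ + |‖l₀ • x‖ - ‖x‖| := by
        rw [norm_smul, hdist, norm_smul, ← abs_norm x, ← abs_mul, abs_norm, sub_mul, one_mul]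
    _ ≤ ‖y - l₀ • x‖ + (‖y - l₀ • x‖ + |‖x‖ - ‖y‖|) := by
        gcongr
        calc |‖l₀ • x‖ - ‖x‖| ≤ |‖l₀ • x‖ - ‖y‖| + |‖y‖ - ‖x‖| := abs_sub_le _ _ _
          _ ≤ ‖y - l₀ • x‖ + |‖x‖ - ‖y‖| := by
            rw [abs_sub_comm (‖y‖)]
            gcongr
            rw [norm_sub_rev]
            exact abs_norm_sub_norm_le _ _
    _ = 2 * ‖y - l₀ • x‖ + |‖x‖ - ‖y‖| := by ring

theorem exists_norm_eq_one_eLpNorm_sub_smul_le {α 𝕜 E : Type*} [MeasurableSpace α] [RCLike 𝕜]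
    [NormedAddCommGroup E] [NormedSpace 𝕜 E] {μ : Measure α} {p : ℝ≥0∞} (hp : 1 ≤ p)
    {f g : α → E} (hf : AEStronglyMeasurable f μ) (hg : AEStronglyMeasurable g μ) (l₀ : 𝕜) :
    ∃ l : 𝕜, ‖l‖ = 1 ∧ eLpNorm (fun x => g x - l • f x) p μ ≤
      2 * eLpNorm (fun x => g x - l₀ • f x) p μ + eLpNorm (fun x => ‖f x‖ - ‖g x‖) p μ := by
  obtain ⟨l, hl, hle⟩ := exists_norm_eq_one_norm_sub_smul_le (E := E) l₀
  refine ⟨l, hl, ?_⟩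
  set d : α → ℝ := fun x => ‖g x - l₀ • f x‖
  set e : α → ℝ := fun x => ‖‖f x‖ - ‖g x‖‖
  calc eLpNorm (fun x => g x - l • f x) p μ ≤ eLpNorm ((2 : ℝ) • d + e) p μ :=
        eLpNorm_mono fun x => (hle (f x) (g x)).trans (le_abs_self _)
    _ ≤ eLpNorm ((2 : ℝ) • d) p μ + eLpNorm e p μ :=
        eLpNorm_add_le ((hg.sub (hf.const_smul l₀)).norm.const_smul 2) (hf.norm.sub hg.norm).norm hp
    _ = 2 * eLpNorm (fun x => g x - l₀ • f x) p μ + eLpNorm (fun x => ‖f x‖ - ‖g x‖) p μ := by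
        rw [eLpNorm_const_smul, eLpNorm_norm, eLpNorm_norm, Real.enorm_eq_ofReal zero_le_two,
          ENNReal.ofReal_ofNat]

theorem stability_estimate_holomorphic_poincare_general
    (Ω : Set ℂ) (hΩ : IsOpen Ω) (p : ℝ≥0∞) (hp : 1 ≤ p)
    (F₁ F₂ : ℂ → ℂ) (h1 : DifferentiableOn ℂ F₁ Ω) (h2 : DifferentiableOn ℂ F₂ Ω)
    (h1ne : ∀ z ∈ Ω, F₁ z ≠ 0)
    (h2ne : ∀ z ∈ Ω, ∃ w ∈ connectedComponentIn Ω z, F₂ w ≠ 0)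
    (l₀ : ℂ) (CP : ℝ)
    (hpoinc : eLpNorm (fun z => F₂ z - l₀ * F₁ z) p (volume.restrict Ω) ≤
      ENNReal.ofReal CP *
        eLpNorm (fun z => deriv F₂ z - F₂ z * deriv F₁ z / F₁ z) p (volume.restrict Ω)) :
    ∃ l : ℂ, ‖l‖ = 1 ∧
      eLpNorm (fun z => F₂ z - l * F₁ z) p (volume.restrict Ω) ≤
        ENNReal.ofReal (2 * CP) *
          (eLpNorm (fun z => ‖fderiv ℝ (fun w => ‖F₂ w‖) z -
                fderiv ℝ (fun w => ‖F₁ w‖) z‖) p (volume.restrict Ω) +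
            eLpNorm (fun z => (‖fderiv ℝ (fun w => ‖F₁ w‖) z‖ /
                  ‖F₁ z‖) *
                |‖F₁ z‖ - ‖F₂ z‖|) p (volume.restrict Ω)) +
          eLpNorm (fun z => ‖F₁ z‖ - ‖F₂ z‖) p
            (volume.restrict Ω) := by
  have hΩm := hΩ.measurableSet
  obtain ⟨l, hl, hle⟩ := exists_norm_eq_one_eLpNorm_sub_smul_le hp
    (h1.continuousOn.aestronglyMeasurable hΩm) (h2.continuousOn.aestronglyMeasurable hΩm) l₀
  refine ⟨l, hl, hle.trans ?_⟩
  calc 2 * eLpNorm (fun z => F₂ z - l₀ • F₁ z) p (volume.restrict Ω) + _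
      ≤ 2 * (ENNReal.ofReal CP * (_ + _)) + _ := by
        gcongr
        exact hpoinc.trans
          (by gcongr; exact eLpNorm_deriv_sub_mul_deriv_div_le volume hΩ hp h1 h2 h1ne h2ne)
    _ = _ := by rw [ENNReal.ofReal_mul zero_le_two, ENNReal.ofReal_ofNat, mul_assoc]

/-- **Elementary stability estimate for holomorphic functions under a Poincaré hypothesis.**
Let `F₁, F₂` be holomorphic on an open `Ω ⊆ ℂ`, with `F₁` nonvanishing and `F₂` not
identically zero on any connected component of `Ω`. If the weighted Poincaré-type
inequality `‖F₂ − λ₀F₁‖_{L^p(Ω)} ≤ C_P ‖F₂′ − F₂F₁′/F₁‖_{L^p(Ω)}` holds, then some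
unimodular `λ` satisfies
`‖F₂ − λF₁‖_{L^p(Ω)} ≤ 2C_P(‖‖D|F₂|−D|F₁|‖‖_{L^p(Ω)} +
‖(‖D|F₁|‖/|F₁|)·||F₁|−|F₂||‖_{L^p(Ω)}) + ‖|F₁|−|F₂|‖_{L^p(Ω)}` (in `[0,∞]`).
Here `D|F_i|(z) = fderiv ℝ (|F_i|) z`, which is `0` wherever `|F_i|` is not
differentiable. -/
theorem stability_estimate_holomorphic_poincare
    (Ω : Set ℂ) (hΩ : IsOpen Ω) (p : ℝ≥0∞) (hp : 1 ≤ p) (hp' : p ≠ ∞)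
    (F₁ F₂ : ℂ → ℂ) (h1 : DifferentiableOn ℂ F₁ Ω) (h2 : DifferentiableOn ℂ F₂ Ω)
    (h1ne : ∀ z ∈ Ω, F₁ z ≠ 0)
    (h2ne : ∀ z ∈ Ω, ∃ w ∈ connectedComponentIn Ω z, F₂ w ≠ 0)
    (l₀ : ℂ) (CP : ℝ) (hCP : 0 ≤ CP)
    (hpoinc : eLpNorm (fun z => F₂ z - l₀ * F₁ z) p (volume.restrict Ω) ≤
      ENNReal.ofReal CP *
        eLpNorm (fun z => deriv F₂ z - F₂ z * deriv F₁ z / F₁ z) p (volume.restrict Ω)) :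
    ∃ l : ℂ, ‖l‖ = 1 ∧
      eLpNorm (fun z => F₂ z - l * F₁ z) p (volume.restrict Ω) ≤
        ENNReal.ofReal (2 * CP) *
          (eLpNorm (fun z => ‖fderiv ℝ (fun w => ‖F₂ w‖) z -
                fderiv ℝ (fun w => ‖F₁ w‖) z‖) p (volume.restrict Ω) +
            eLpNorm (fun z => (‖fderiv ℝ (fun w => ‖F₁ w‖) z‖ /
                  ‖F₁ z‖) *
                |‖F₁ z‖ - ‖F₂ z‖|) p (volume.restrict Ω)) +
          eLpNorm (fun z => ‖F₁ z‖ - ‖F₂ z‖) p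
            (volume.restrict Ω) :=
  stability_estimate_holomorphic_poincare_general Ω hΩ p hp F₁ F₂ h1 h2 h1ne h2ne l₀ CP hpoinc
end
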